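/- If a subminion of the minion of affine maps over Z_3 does not contain the binary element (2,2), then it equals exactly the minion of projections (the set of standard basis tuples e_i in each arity). -/

import Mathlib

/-!
Minoring any `α ∈ S n` along the constant map to `i` gives the projection `eᵢ`, because the
coefficients of `α` sum to `1`; so all projections lie in `S`. Conversely, minoring `α` along
the indicator map of a set `T` of coordinates gives the pair `(∑_T α, 1 - ∑_T α)`, which is
`(2, 2)` exactly when `∑_T α = 2`. So no sub-sum of `α` equals `2`: every coefficient is `0` or
`1`, no two coefficients are `1`, and as they sum to `1`, `α` is a projection.
-/

/-- The minor of a coefficient tuple `α ∈ Z₃ⁿ` along `π : [n] → [m]`: coefficients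
are summed over preimages. -/
def minorMap {n m : ℕ} (π : Fin n → Fin m) (α : Fin n → ZMod 3) : Fin m → ZMod 3 :=
  fun j => ∑ i ∈ Finset.univ.filter (fun i => π i = j), α i

theorem minorMap_const {n m : ℕ} (i : Fin m) (α : Fin n → ZMod 3) :
    minorMap (fun _ => i) α = fun j => if j = i then ∑ k, α k else 0 := by
  funext j
  by_cases h : j = i
  · simp [minorMap, h]
  · simp [minorMap, h, Ne.symm h]

theorem minorMap_ite_mem {n : ℕ} (T : Finset (Fin n)) (α : Fin n → ZMod 3) :
    minorMap (fun k => if k ∈ T then (0 : Fin 2) else 1) α = ![∑ k ∈ T, α k, ∑ k ∈ Tᶜ, α k] := by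
  funext j
  fin_cases j
  · simp [minorMap]
  · simp [minorMap, Finset.compl_eq_univ_sdiff, Finset.filter_not]

theorem minorMap_ite_mem_eq_two {n : ℕ} {T : Finset (Fin n)} {α : Fin n → ZMod 3}
    (hα : ∑ k, α k = 1) (hT : ∑ k ∈ T, α k = 2) :
    minorMap (fun k => if k ∈ T then (0 : Fin 2) else 1) α = fun _ => 2 := by
  have hTc : ∑ k ∈ Tᶜ, α k = 2 := by
    have := Finset.sum_add_sum_compl T α
    rw [hT, hα] at this
    rw [eq_sub_of_add_eq' this]
    rfl
  rw [minorMap_ite_mem, hT, hTc]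
  funext j
  fin_cases j <;> rfl

theorem eq_ite_of_sum_eq_one_of_sum_ne_two {ι : Type*} [Fintype ι] [DecidableEq ι]
    {α : ι → ZMod 3} (hα : ∑ k, α k = 1) (hT : ∀ T : Finset ι, ∑ k ∈ T, α k ≠ 2) :
    ∃ i, α = fun j => if j = i then 1 else 0 := by
  have h01 : ∀ i, α i = 0 ∨ α i = 1 := fun i => by
    have := hT {i}
    rw [Finset.sum_singleton] at this
    generalize α i = x at this
    revert x; decide
  have hunique : ∀ i j, α i = 1 → α j = 1 → i = j := fun i j hi hj => by
    by_contra hij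
    apply hT {i, j}
    rw [Finset.sum_pair hij, hi, hj]
    rfl
  obtain ⟨i, hi⟩ : ∃ i, α i = 1 := by
    by_contra! h
    have : ∑ k, α k = 0 := Finset.sum_eq_zero fun k _ => (h01 k).resolve_right (h k)
    rw [hα] at this
    exact one_ne_zero this
  refine ⟨i, funext fun j => ?_⟩
  split_ifs with hji
  · rwa [hji]
  · exact (h01 j).resolve_right fun hj => hji (hunique j i hj hi)

/-- A subminion of the minion of affine maps over `Z₃` that does not contain the
binary element `(2, 2)` is exactly the minion of projections. -/
theorem subminion_avoiding_22_is_projections (S : ∀ n : ℕ, Set (Fin n → ZMod 3))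
    (haff : ∀ n, ∀ α ∈ S n, ∑ i, α i = 1)
    (hclosed : ∀ n m : ℕ, 1 ≤ n → 1 ≤ m → ∀ (π : Fin n → Fin m), ∀ α ∈ S n, minorMap π α ∈ S m)
    (hne : ∀ n : ℕ, 1 ≤ n → (S n).Nonempty)
    (h22 : (fun _ : Fin 2 => (2 : ZMod 3)) ∉ S 2) :
    ∀ n : ℕ, 1 ≤ n →
      S n = {α | ∃ i : Fin n, α = fun j => if j = i then (1 : ZMod 3) else 0} := by
  intro n hn
  ext α
  constructor
  · intro hα
    refine eq_ite_of_sum_eq_one_of_sum_ne_two (haff n α hα) fun T hT => h22 ?_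
    rw [← minorMap_ite_mem_eq_two (haff n α hα) hT]
    exact hclosed n 2 hn (by norm_num) _ α hα
  · rintro ⟨i, rfl⟩
    obtain ⟨β, hβ⟩ := hne n hn
    simpa [minorMap_const, haff n β hβ] using hclosed n n hn hn (fun _ => i) β hβ
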